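/- (General recursion typing lemma) If Γ ⊨ a : τ → τ, then Γ ⊨ fix a : τ. -/
import Mathlib


/-- Terms of the call-by-name λ-calculus with constants and a fixpoint operator. -/
inductive Tm where
  | const : ℕ → Tm
  | var : String → Tm
  | lam : String → Tm → Tm
  | app : Tm → Tm → Tm
  | fix : Tm → Tm
deriving DecidableEq

/-- Substitution of `b` for free occurrences of `x` (capture-avoiding when `b` is closed). -/
def subst (x : String) (b : Tm) : Tm → Tm
  | .const c => .const c
  | .var y => if y = x then b else .var y
  | .lam y a => if y = x then .lam y a else .lam y (subst x b a)
  | .app a1 a2 => .app (subst x b a1) (subst x b a2)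
  | .fix a => .fix (subst x b a)

/-- Free variables. -/
def fv : Tm → Set String
  | .const _ => ∅
  | .var y => {y}
  | .lam y a => fv a \ {y}
  | .app a b => fv a ∪ fv b
  | .fix a => fv a

def Closed (a : Tm) : Prop := fv a = ∅

/-- Call-by-name small-step semantics. -/
inductive Step : Tm → Tm → Prop
  | beta (x : String) (a b : Tm) : Step (.app (.lam x a) b) (subst x b a)
  | app1 {a a' : Tm} (b : Tm) : Step a a' → Step (.app a b) (.app a' b)
  | fix (a : Tm) : Step (.fix a) (.app a (.fix a))

/-- `Steps j a b` means `a →^j b`. -/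
inductive Steps : ℕ → Tm → Tm → Prop
  | refl (a : Tm) : Steps 0 a a
  | head {a b c : Tm} {j : ℕ} : Step a b → Steps j b c → Steps (j + 1) a c

/-- Values: constants and closed λ-abstractions. -/
def IsValue (v : Tm) : Prop :=
  (∃ c, v = .const c) ∨ (∃ x a, v = .lam x a ∧ Closed v)

/-- Irreducible terms. -/
def Irred (a : Tm) : Prop := ¬ ∃ b, Step a b

/-- Semantic types are sets of pairs (index, value). -/
abbrev SemType := Set (ℕ × Tm)

/-- A type contains only values and is closed under decreasing index. -/
def IsType (τ : SemType) : Prop :=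
  (∀ p ∈ τ, IsValue p.2) ∧ ∀ k v j, (k, v) ∈ τ → j ≤ k → (j, v) ∈ τ

/-- `a :ₖ τ`: `a` is closed and whenever `a →^j b` with `b` irreducible and `j < k`,
then `(k - j, b) ∈ τ`. -/
def HasTypeIdx (a : Tm) (k : ℕ) (τ : SemType) : Prop :=
  Closed a ∧ ∀ j b, j < k → Steps j a b → Irred b → (k - j, b) ∈ τ

/-- The semantic function type `τ → τ'`. -/
def Arrow (τ τ' : SemType) : SemType :=
  {p | ∃ x a, p.2 = Tm.lam x a ∧ Closed (Tm.lam x a) ∧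
    ∀ j < p.1, ∀ b, HasTypeIdx b j τ → HasTypeIdx (subst x b a) j τ'}

/-- The semantic type `Nat` of constants. -/
def NatTy : SemType := {p | ∃ c, p.2 = Tm.const c}

/-- `a` is safe for `k` steps. -/
def SafeFor (k : ℕ) (a : Tm) : Prop :=
  ∀ j b, j < k → Steps j a b → IsValue b ∨ ∃ b', Step b b'

/-- `a` is safe. -/
def Safe (a : Tm) : Prop := ∀ k, SafeFor k a

/-- Applying a ground substitution `γ` to a term. -/
def applySubst (γ : String → Option Tm) : Tm → Tm
  | .const c => .const c
  | .var y => (γ y).getD (.var y)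
  | .lam y a => .lam y (applySubst (fun z => if z = y then none else γ z) a)
  | .app a b => .app (applySubst γ a) (applySubst γ b)
  | .fix a => .fix (applySubst γ a)

/-- `γ :ₖ Γ`: same domains, and `γ(x) :ₖ Γ(x)` for all `x`. -/
def EnvOK (γ : String → Option Tm) (Γ : String → Option SemType) (k : ℕ) : Prop :=
  (∀ x, (γ x).isSome ↔ (Γ x).isSome) ∧
  ∀ x t τ, γ x = some t → Γ x = some τ → HasTypeIdx t k τ

/-- A type environment maps variables to (semantic) types. -/
def TyEnvOK (Γ : String → Option SemType) : Prop :=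
  ∀ x τ, Γ x = some τ → IsType τ

/-- `Γ ⊨ a :ₖ τ`. -/
def ModelsIdx (Γ : String → Option SemType) (a : Tm) (k : ℕ) (τ : SemType) : Prop :=
  ∀ γ, EnvOK γ Γ k → HasTypeIdx (applySubst γ a) k τ

/-- `Γ ⊨ a : τ`. -/
def Models (Γ : String → Option SemType) (a : Tm) (τ : SemType) : Prop :=
  ∀ k, ModelsIdx Γ a k τ

/-- Update of a partial map. -/
def upd {α : Type _} (f : String → Option α) (x : String) (v : α) :
    String → Option α := fun y => if y = x then some v else f y

/-- The k-approximation of an indexed set. -/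
def floorTy (τ : SemType) (k : ℕ) : SemType := {p ∈ τ | p.1 < k}

/-- Well founded functionals. -/
def WFF (F : SemType → SemType) : Prop :=
  (∀ τ, IsType τ → IsType (F τ)) ∧
  ∀ τ k, IsType τ → floorTy (F τ) (k + 1) = floorTy (F (floorTy τ k)) (k + 1)

/-- The candidate fixed point `μF`. -/
def muF (F : SemType → SemType) : SemType := {p | p ∈ F^[p.1 + 1] ∅}


lemma lam_irred (x : String) (a : Tm) : Irred (Tm.lam x a) := by
  rintro ⟨b, hb⟩; cases hb

lemma steps_app_inv {m : ℕ} {A B c : Tm} (h : Steps m (Tm.app A B) c) (hc : Irred c) :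
    (∃ i x a0, Steps i A (Tm.lam x a0) ∧ i + 1 ≤ m ∧ Steps (m - i - 1) (subst x B a0) c) ∨
    (∃ A', Steps m A A' ∧ c = Tm.app A' B ∧ Irred A') := by
  induction m generalizing A with
  | zero =>
    cases h
    exact Or.inr ⟨A, Steps.refl A, rfl,
      fun ⟨A', hA'⟩ => hc ⟨Tm.app A' B, Step.app1 B hA'⟩⟩
  | succ m ih =>
    cases h with
    | head hs hrest =>
      cases hs with
      | beta x a0 =>
        refine Or.inl ⟨0, x, a0, Steps.refl _, by omega, ?_⟩
        have e : m + 1 - 0 - 1 = m := by omega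
        rw [e]; exact hrest
      | app1 _ hA =>
        rcases ih hrest with ⟨i, x, a0, h1, h2, h3⟩ | ⟨A', h1, h2, h3⟩
        · refine Or.inl ⟨i + 1, x, a0, Steps.head hA h1, by omega, ?_⟩
          have e : m + 1 - (i + 1) - 1 = m - i - 1 := by omega
          rw [e]; exact h3
        · exact Or.inr ⟨A', Steps.head hA h1, h2, h3⟩

lemma hasTypeIdx_mono {t : Tm} {τ : SemType} (hτ : IsType τ) {k j : ℕ} (hj : j ≤ k)
    (h : HasTypeIdx t k τ) : HasTypeIdx t j τ := by
  refine ⟨h.1, fun j' b hj' hs hb => ?_⟩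
  exact hτ.2 _ _ _ (h.2 j' b (by omega) hs hb) (by omega)

lemma envOK_mono {γ : String → Option Tm} {Γ : String → Option SemType}
    (hΓ : TyEnvOK Γ) {k j : ℕ} (hj : j ≤ k) (h : EnvOK γ Γ k) : EnvOK γ Γ j :=
  ⟨h.1, fun x t τ ht hτ => hasTypeIdx_mono (hΓ x τ hτ) hj (h.2 x t τ ht hτ)⟩

theorem fix_typing (Γ : String → Option SemType) (a : Tm) (τ : SemType)
    (hΓ : TyEnvOK Γ) (hτ : IsType τ) (h : Models Γ a (Arrow τ τ)) :
    Models Γ (Tm.fix a) τ := by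
  intro k
  induction k using Nat.strong_induction_on with
  | _ k ih =>
  intro γ hγ
  have hA := h k γ hγ
  refine ⟨?_, ?_⟩
  · show Closed (applySubst γ (Tm.fix a))
    have : applySubst γ (Tm.fix a) = Tm.fix (applySubst γ a) := rfl
    rw [this]
    simpa [Closed, fv] using hA.1
  · intro j b hj hs hb
    have e : applySubst γ (Tm.fix a) = Tm.fix (applySubst γ a) := rfl
    rw [e] at hs
    set A := applySubst γ a with hAdef
    cases hs with
    | refl => exact absurd ⟨_, Step.fix A⟩ hb
    | @head _ _ _ j' hs1 hrest =>
      cases hs1 with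
      | fix =>
        rcases steps_app_inv hrest hb with ⟨i, x, a0, h1, h2, h3⟩ | ⟨A', h1, h2, h3⟩
        · have hmem := hA.2 i _ (by omega) h1 (lam_irred x a0)
          obtain ⟨x', a0', heq, hcl, hsp⟩ := hmem
          simp only at heq
          injection heq with hx ha
          subst hx; subst ha
          have hfix : HasTypeIdx (Tm.fix A) (k - i - 1) τ :=
            ih (k - i - 1) (by omega) γ (envOK_mono hΓ (by omega) hγ)
          have htb := hsp (k - i - 1) (by omega) (Tm.fix A) hfix
          have hmem2 := htb.2 (j' - i - 1) b (by omega) h3 hb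
          exact hτ.2 _ _ _ hmem2 (by omega)
        · have hmem := hA.2 j' _ (by omega) h1 h3
          obtain ⟨x', a0', heq, hcl, hsp⟩ := hmem
          simp only at heq
          subst heq
          exact absurd ⟨_, Step.beta x' a0' (Tm.fix A)⟩ (h2 ▸ hb)
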